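/- arXiv:1805.03349 — 4 statements merged into one kernel-verified Lean document; each statement's English description precedes it below -/
import Mathlib

section
/- Let U be a neighborhood of 0 ∈ ℂ^{2m+1} with the standard contact form θ, f a holomorphic function on U, F ⊂ U the hypersurface f = 0, and v^f the associated vector field. Then v^f vanishes at a point y ∈ F if and only if F is singular at y or θ(T_{F,y}) = 0. -/
open Set Function

/-! # Framework: holomorphic Legendrian singularities in charts

Complex manifolds are modelled in charts: a complex manifold germ is an open subset of
`ℂⁿ`, holomorphic = `ℂ`-analytic.  By the Darboux theorem, a contact manifold of
dimension `2m+1` is modelled by a chart `(U, θ)` where `θ` is a holomorphic contact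
`1`-form on an open set `U ⊆ ℂ^{2m+1}`, the contact distribution being `D = ker θ`. -/

/-- The affine space `ℂⁿ`. -/
abbrev Cn (n : ℕ) : Type := Fin n → ℂ

section Generic

variable {F : Type} [NormedAddCommGroup F] [NormedSpace ℂ F]

/-- The Zariski tangent space at `x` of a subset `Z` of a complex normed space:
the common kernel of the differentials at `x` of all germs at `x` of holomorphic
functions vanishing on `Z`. -/
def zTang (Z : Set F) (x : F) : Set F :=
  {v | ∀ (V : Set F) (g : F → ℂ), IsOpen V → x ∈ V → AnalyticOnNhd ℂ g V →
    (∀ z ∈ Z ∩ V, g z = 0) → fderiv ℂ g x v = 0}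

/-- `x` is a nonsingular point of the analytic set `Z`, of codimension `c`:
near `x`, `Z` is the zero set of a holomorphic submersion to `ℂᶜ`. -/
def SmoothPt (c : ℕ) (Z : Set F) (x : F) : Prop :=
  x ∈ Z ∧ ∃ (V : Set F) (g : F → Cn c), IsOpen V ∧ x ∈ V ∧ AnalyticOnNhd ℂ g V ∧
    Z ∩ V = {z | z ∈ V ∧ g z = 0} ∧ Function.Surjective (fderiv ℂ g x)

/-- `x` is a nonsingular point of `Z` (of some codimension). -/
def SmoothPtAny (Z : Set F) (x : F) : Prop := ∃ c, SmoothPt c Z x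

/-- `Z` is an analytic subvariety of the open set `U`: locally on `U`, `Z` is the common
zero set of finitely many holomorphic functions. -/
def IsAnSub (U Z : Set F) : Prop :=
  Z ⊆ U ∧ ∀ x ∈ U, ∃ (V : Set F) (k : ℕ) (g : Fin k → F → ℂ),
    IsOpen V ∧ x ∈ V ∧ V ⊆ U ∧ (∀ i, AnalyticOnNhd ℂ (g i) V) ∧
    Z ∩ V = {z | z ∈ V ∧ ∀ i, g i z = 0}

/-- The exterior derivative of a holomorphic `1`-form evaluated on constant vector
fields: `dθ_x(u,v) = (D_xθ)(u)(v) - (D_xθ)(v)(u)`. -/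
noncomputable def exd (θ : F → (F →L[ℂ] ℂ)) (x : F) (u v : F) : ℂ :=
  fderiv ℂ θ x u v - fderiv ℂ θ x v u

/-- The Lie derivative of a holomorphic `1`-form `θ` along a holomorphic vector field `A`:
`(L_A θ)_x = (D_xθ)(A x) + θ_x ∘ D_xA`. -/
noncomputable def LieD (A : F → F) (θ : F → (F →L[ℂ] ℂ)) (x : F) : F →L[ℂ] ℂ :=
  fderiv ℂ θ x (A x) + (θ x).comp (fderiv ℂ A x)

/-- The germ at `x` of the holomorphic `1`-form `α` lies in `𝒪·dI + I·Ω` where `I` is the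
ideal of germs of holomorphic functions vanishing on `Z`; i.e. the restriction `α|_Z`
is zero in the space of Kähler differentials `Ω_{Z,x}`. -/
def FormVanishesKaehler (Z : Set F) (x : F) (α : F → (F →L[ℂ] ℂ)) : Prop :=
  ∃ V : Set F, IsOpen V ∧ x ∈ V ∧
  ∃ (k l : ℕ) (a g : Fin k → F → ℂ) (c : Fin l → F → ℂ) (ω : Fin l → F → (F →L[ℂ] ℂ)),
    (∀ j, AnalyticOnNhd ℂ (a j) V) ∧ (∀ j, AnalyticOnNhd ℂ (g j) V) ∧
    (∀ j, ∀ z ∈ Z ∩ V, g j z = 0) ∧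
    (∀ j, AnalyticOnNhd ℂ (c j) V) ∧ (∀ j, ∀ z ∈ Z ∩ V, c j z = 0) ∧
    (∀ j, AnalyticOnNhd ℂ (ω j) V) ∧
    ∀ y ∈ V, α y = (∑ j, a j y • fderiv ℂ (g j) y) + (∑ j, c j y • ω j y)

/-- A weakly holomorphic function on `Z`: holomorphic on the nonsingular locus of `Z`
and locally bounded on `Z`. -/
def WeaklyHolo (Z : Set F) (h : F → ℂ) : Prop :=
  (∀ y, SmoothPtAny Z y → ∃ W : Set F, IsOpen W ∧ y ∈ W ∧
    ∃ H : F → ℂ, AnalyticOnNhd ℂ H W ∧ ∀ z ∈ W, SmoothPtAny Z z → h z = H z) ∧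
  (∀ x ∈ Z, ∃ W : Set F, IsOpen W ∧ x ∈ W ∧
    Bornology.IsBounded (h '' {z | z ∈ Z ∩ W ∧ SmoothPtAny Z z}))

/-- `Z` is a normal analytic variety (Oka's criterion: every weakly holomorphic
function germ is holomorphic). -/
def IsNormalSubvariety (Z : Set F) : Prop :=
  ∀ x ∈ Z, ∀ V : Set F, IsOpen V → x ∈ V → ∀ h : F → ℂ, WeaklyHolo (Z ∩ V) h →
    ∃ W : Set F, IsOpen W ∧ x ∈ W ∧ W ⊆ V ∧ ∃ H : F → ℂ, AnalyticOnNhd ℂ H W ∧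
      ∀ z ∈ W, SmoothPtAny (Z ∩ V) z → H z = h z

end Generic

/-! ## Standard coordinates and the standard contact form on `ℂ^{2m+1}` -/

/-- The index `i` (for `1 ≤ i ≤ m`, i.e. the coordinate `x_i`). -/
def lo (m : ℕ) (i : Fin m) : Fin (2*m+1) := ⟨i, by have := i.isLt; omega⟩
/-- The index `m + i` (the coordinate `x_{m+i}`). -/
def hi (m : ℕ) (i : Fin m) : Fin (2*m+1) := ⟨m + i, by have := i.isLt; omega⟩
/-- The last index (the coordinate `x_{2m+1}`). -/
def lst (m : ℕ) : Fin (2*m+1) := ⟨2*m, by omega⟩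
def lo2 (m : ℕ) (i : Fin m) : Fin (2*m) := ⟨i, by have := i.isLt; omega⟩
def hi2 (m : ℕ) (i : Fin m) : Fin (2*m) := ⟨m + i, by have := i.isLt; omega⟩

/-- The standard contact form
`θ = ∑_{i=1}^m (x_{m+i} dx_i − x_i dx_{m+i}) − dx_{2m+1}` on `ℂ^{2m+1}`,
as a holomorphic `1`-form. -/
noncomputable def thC (m : ℕ) (x : Cn (2*m+1)) : Cn (2*m+1) →L[ℂ] ℂ :=
  (∑ i : Fin m,
    (x (hi m i) • (ContinuousLinearMap.proj (lo m i) : Cn (2*m+1) →L[ℂ] ℂ)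
      - x (lo m i) • (ContinuousLinearMap.proj (hi m i) : Cn (2*m+1) →L[ℂ] ℂ)))
  - (ContinuousLinearMap.proj (lst m) : Cn (2*m+1) →L[ℂ] ℂ)

/-- `dθ = 2 ∑_{k=1}^m dx_{m+k} ∧ dx_k` (a constant-coefficient `2`-form). -/
noncomputable def dthC (m : ℕ) (a b : Cn (2*m+1)) : ℂ :=
  2 * ∑ i : Fin m, (a (hi m i) * b (lo m i) - a (lo m i) * b (hi m i))

/-- The standard symplectic form `dθ|_{ℂ^{2m}} = 2 ∑_{k=1}^m dx_{m+k} ∧ dx_k` on the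
hyperplane `ℂ^{2m} = {x_{2m+1} = 0}`. -/
noncomputable def omS (m : ℕ) (a b : Cn (2*m)) : ℂ :=
  2 * ∑ i : Fin m, (a (hi2 m i) * b (lo2 m i) - a (lo2 m i) * b (hi2 m i))

/-- Partial derivative `∂f/∂x_j` at `x`. -/
noncomputable def pd {n : ℕ} (f : Cn n → ℂ) (j : Fin n) (x : Cn n) : ℂ :=
  fderiv ℂ f x (Pi.single j 1)

/-- The contact Hamiltonian vector field `v^f` of a holomorphic function `f` on
`ℂ^{2m+1}` (Theorem 2.2 of the paper):
`2v^f = ∑ (∂f/∂x_{m+k} − (∂f/∂x_{2m+1})x_k) ∂/∂x_k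
      + ∑ (−∂f/∂x_k − (∂f/∂x_{2m+1})x_{m+k}) ∂/∂x_{m+k}
      + (∑ ((∂f/∂x_k)x_k + (∂f/∂x_{m+k})x_{m+k}) − 2f) ∂/∂x_{2m+1}`. -/
noncomputable def vf (m : ℕ) (f : Cn (2*m+1) → ℂ) (x : Cn (2*m+1)) : Cn (2*m+1) :=
  fun j =>
    if h : (j : ℕ) < m then
      (pd f (hi m ⟨j, h⟩) x - pd f (lst m) x * x j) / 2
    else if h2 : (j : ℕ) < 2*m then
      (-(pd f (lo m ⟨(j : ℕ) - m, by omega⟩) x) - pd f (lst m) x * x j) / 2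
    else
      ((∑ i : Fin m, (pd f (lo m i) x * x (lo m i) + pd f (hi m i) x * x (hi m i)))
        - 2 * f x) / 2

/-! ## Contact charts, contactomorphisms, Legendrian subvarieties -/

/-- `(U, θ)` is a chart of a contact manifold of dimension `2m+1`: `U` is open, `θ` is a
holomorphic `1`-form on `U`, and `dθ` is nondegenerate on `D = ker θ` at every point of
`U` (i.e. the Frobenius bracket `∧²D → T/D` is nondegenerate). -/
def IsContactForm (m : ℕ) (U : Set (Cn (2*m+1)))
    (θ : Cn (2*m+1) → (Cn (2*m+1) →L[ℂ] ℂ)) : Prop :=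
  IsOpen U ∧ AnalyticOnNhd ℂ θ U ∧
  ∀ x ∈ U, ∀ u : Cn (2*m+1), θ x u = 0 →
    (∀ v : Cn (2*m+1), θ x v = 0 → exd θ x u v = 0) → u = 0

/-- `φ : V₁ → V₂` is a contactomorphism (with inverse `ψ`) between the contact charts
`(V₁, θ₁)` and `(V₂, θ₂)`: a biholomorphism such that `dφ` maps `ker θ₁` to `ker θ₂`. -/
def IsContactoOn (m : ℕ) (V₁ V₂ : Set (Cn (2*m+1)))
    (θ₁ θ₂ : Cn (2*m+1) → (Cn (2*m+1) →L[ℂ] ℂ))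
    (φ ψ : Cn (2*m+1) → Cn (2*m+1)) : Prop :=
  AnalyticOnNhd ℂ φ V₁ ∧ AnalyticOnNhd ℂ ψ V₂ ∧
  MapsTo φ V₁ V₂ ∧ MapsTo ψ V₂ V₁ ∧
  (∀ x ∈ V₁, ψ (φ x) = x) ∧ (∀ y ∈ V₂, φ (ψ y) = y) ∧
  ∀ x ∈ V₁, ∀ v : Cn (2*m+1), θ₁ x v = 0 ↔ θ₂ (φ x) (fderiv ℂ φ x v) = 0

/-- The two germs `x₁ ∈ Z₁ ⊆ (U₁, θ₁)` and `x₂ ∈ Z₂ ⊆ (U₂, θ₂)` are contactomorphic: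
there are open neighbourhoods `Vᵢ ⊆ Uᵢ` of `xᵢ` and a contactomorphism `φ : V₁ → V₂`
with `φ x₁ = x₂` and `φ(Z₁ ∩ V₁) = Z₂ ∩ V₂`. -/
def GermContacto (m : ℕ)
    (U₁ : Set (Cn (2*m+1))) (θ₁ : Cn (2*m+1) → (Cn (2*m+1) →L[ℂ] ℂ))
    (Z₁ : Set (Cn (2*m+1))) (x₁ : Cn (2*m+1))
    (U₂ : Set (Cn (2*m+1))) (θ₂ : Cn (2*m+1) → (Cn (2*m+1) →L[ℂ] ℂ))
    (Z₂ : Set (Cn (2*m+1))) (x₂ : Cn (2*m+1)) : Prop :=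
  ∃ (V₁ V₂ : Set (Cn (2*m+1))) (φ ψ : Cn (2*m+1) → Cn (2*m+1)),
    IsOpen V₁ ∧ IsOpen V₂ ∧ x₁ ∈ V₁ ∧ x₂ ∈ V₂ ∧ V₁ ⊆ U₁ ∧ V₂ ⊆ U₂ ∧
    IsContactoOn m V₁ V₂ θ₁ θ₂ φ ψ ∧ φ x₁ = x₂ ∧ φ '' (Z₁ ∩ V₁) = Z₂ ∩ V₂

/-- `Z` is a Legendrian subvariety of the contact chart `(U, θ)`: an analytic subvariety
of `U` of pure dimension `m` (its `m`-dimensional nonsingular locus is dense in `Z`)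
whose tangent spaces at nonsingular points are contained in `D = ker θ`. -/
def IsLegendrian (m : ℕ) (U : Set (Cn (2*m+1)))
    (θ : Cn (2*m+1) → (Cn (2*m+1) →L[ℂ] ℂ)) (Z : Set (Cn (2*m+1))) : Prop :=
  IsAnSub U Z ∧
  (∀ x ∈ Z, x ∈ closure {y | SmoothPt (m+1) Z y}) ∧
  (∀ x, SmoothPt (m+1) Z x → ∀ v ∈ zTang Z x, θ x v = 0)

/-- `S` is a Legendrian submanifold of the contact chart `(U, θ)`. -/
def IsLegSubmanifold (m : ℕ) (U : Set (Cn (2*m+1)))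
    (θ : Cn (2*m+1) → (Cn (2*m+1) →L[ℂ] ℂ)) (S : Set (Cn (2*m+1))) : Prop :=
  S ⊆ U ∧ ∀ x ∈ S, SmoothPt (m+1) S x ∧ ∀ v ∈ zTang S x, θ x v = 0

/-! ## Cones, Lagrangian cones, tangent cones -/

/-- The embedding `ℂ^{2m} ↪ ℂ^{2m+1}` as the hyperplane `{x_{2m+1} = 0}`. -/
def embedH (m : ℕ) (y : Cn (2*m)) : Cn (2*m+1) :=
  fun j => if h : (j : ℕ) < 2*m then y ⟨j, h⟩ else 0

/-- Projection `ℂ^{2m+1} → ℂ^{2m}` forgetting the last coordinate. -/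
def prE (m : ℕ) (x : Cn (2*m+1)) : Cn (2*m) :=
  fun i => x ⟨i, by have := i.isLt; omega⟩

/-- `Y ⊆ ℂ^{2m}` is a Lagrangian cone for the symplectic form `ω = dθ|_{ℂ^{2m}}`:
a reduced affine cone (the zero set of a homogeneous ideal of polynomials) of pure
dimension `m` on whose nonsingular locus `ω` vanishes. -/
def IsLagrangianCone (m : ℕ) (Y : Set (Cn (2*m))) : Prop :=
  (∃ S : Set (MvPolynomial (Fin (2*m)) ℂ),
    (∀ P ∈ S, ∃ d, MvPolynomial.IsHomogeneous P d) ∧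
    Y = {y : Cn (2*m) | ∀ P ∈ S, MvPolynomial.eval y P = 0}) ∧
  (∀ x ∈ Y, x ∈ closure {y | SmoothPt m Y y}) ∧
  (∀ x, SmoothPt m Y x → ∀ u ∈ zTang Y x, ∀ v ∈ zTang Y x, omS m u v = 0)

/-- The Legendrian germ `x ∈ Z ⊆ (U, θ)` is a Lagrangian cone singularity: it is
contactomorphic to the germ at `0` of a Lagrangian cone `Y ⊆ ℂ^{2m} ⊆ ℂ^{2m+1}`
regarded as a Legendrian subvariety of `(ℂ^{2m+1}, θ_{std})`. -/
def IsLagConeSing (m : ℕ) (U : Set (Cn (2*m+1)))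
    (θ : Cn (2*m+1) → (Cn (2*m+1) →L[ℂ] ℂ))
    (Z : Set (Cn (2*m+1))) (x : Cn (2*m+1)) : Prop :=
  ∃ Y : Set (Cn (2*m)), IsLagrangianCone m Y ∧
    GermContacto m U θ Z x Set.univ (thC m) (embedH m '' Y) 0

/-- Generators of the tangent cone ideal of `Z` at `x`: homogeneous polynomials which
are the lowest-order terms of Taylor expansions at `x` of holomorphic germs vanishing
on `Z`. -/
def TCgens (n : ℕ) (Z : Set (Cn n)) (x : Cn n) : Set (MvPolynomial (Fin n) ℂ) :=
  {P | ∃ (V : Set (Cn n)) (f : Cn n → ℂ) (d : ℕ),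
    IsOpen V ∧ x ∈ V ∧ AnalyticOnNhd ℂ f V ∧ (∀ z ∈ Z ∩ V, f z = 0) ∧
    (∀ k < d, iteratedFDeriv ℂ k f x = 0) ∧ iteratedFDeriv ℂ d f x ≠ 0 ∧
    MvPolynomial.IsHomogeneous P d ∧
    ∀ v : Cn n, MvPolynomial.eval v P
      = iteratedFDeriv ℂ d f x (fun _ => v) / (d.factorial : ℂ)}

/-- The ideal of the tangent cone `TC_{Z,x}` (a subscheme of `T_x ℂⁿ = ℂⁿ`). -/
noncomputable def TCideal (n : ℕ) (Z : Set (Cn n)) (x : Cn n) : Ideal (MvPolynomial (Fin n) ℂ) :=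
  Ideal.span (TCgens n Z x)

/--  The underlying set of the tangent cone `TC_{Z,x} ⊆ T_x ℂⁿ = ℂⁿ`. -/
def TCset (n : ℕ) (Z : Set (Cn n)) (x : Cn n) : Set (Cn n) :=
  {v | ∀ P ∈ TCideal n Z x, MvPolynomial.eval v P = 0}

/-- Membership in the saturation of a homogeneous ideal `J` with respect to the
irrelevant ideal. -/
def memSat (n : ℕ) (J : Ideal (MvPolynomial (Fin n) ℂ)) (P : MvPolynomial (Fin n) ℂ) :
    Prop :=
  ∃ N : ℕ, ∀ Q ∈ (Ideal.span (Set.range (MvPolynomial.X : Fin n → MvPolynomial (Fin n) ℂ))) ^ N,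
    Q * P ∈ J

/-- The projective scheme `Proj` of the homogeneous ideal `J` is reduced: the saturation
of `J` is a radical ideal. -/
def ProjReduced (n : ℕ) (J : Ideal (MvPolynomial (Fin n) ℂ)) : Prop :=
  ∀ (P : MvPolynomial (Fin n) ℂ) (k : ℕ), k ≠ 0 → memSat n J (P ^ k) → memSat n J P

/-- The linear vector field `ω†(q) = ∑ (∂q/∂y_{m+k} ∂/∂y_k − ∂q/∂y_k ∂/∂y_{m+k})`
associated to a homogeneous quadratic polynomial `q` on the symplectic vector space
`ℂ^{2m}` (Proposition 3.12 of the paper);  `∂q/∂y_j(x) = polar q (x, e_j)`. -/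
noncomputable def omDag (m : ℕ) (Q : QuadraticForm ℂ (Cn (2*m))) (x : Cn (2*m)) :
    Cn (2*m) :=
  fun j =>
    if h : (j : ℕ) < m then
      QuadraticMap.polar (⇑Q) x (Pi.single (hi2 m ⟨j, h⟩) 1)
    else
      - QuadraticMap.polar (⇑Q) x (Pi.single (lo2 m ⟨(j : ℕ) - m, by have := j.isLt; omega⟩) 1)

/-! ## Time-dependent vector fields, flows, infinitesimal contactomorphisms -/

/-- `A` is an infinitesimal contactomorphism of the contact chart `(U, θ)`: a holomorphic
vector field whose (local) flows preserve `D = ker θ`; equivalently `L_A θ = g·θ`. -/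
def IsInfCont (m : ℕ) (U : Set (Cn (2*m+1)))
    (θ : Cn (2*m+1) → (Cn (2*m+1) →L[ℂ] ℂ)) (A : Cn (2*m+1) → Cn (2*m+1)) : Prop :=
  AnalyticOnNhd ℂ A U ∧ ∃ g : Cn (2*m+1) → ℂ, AnalyticOnNhd ℂ g U ∧
    ∀ x ∈ U, LieD A θ x = g x • θ x

/-- `Ψ` satisfies properties (a), (b), (c) of Lemma 5.4 for the time-dependent
holomorphic vector field `B` on `U × Δ` (with `dπ^Δ(B) = 0`):  it commutes with the
projection to `Δ` (built into the encoding), restricts to the identity at `t = 0`,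
and `dΨ(∂/∂t) = B + ∂/∂t`. -/
def IsFlowABC (n : ℕ) (U : Set (Cn n)) (Δ : Set ℂ) (B : Cn n × ℂ → Cn n)
    (Uz : Set (Cn n)) (Δz : Set ℂ) (Ψ : Cn n × ℂ → Cn n) : Prop :=
  IsOpen Uz ∧ IsOpen Δz ∧ (0 : ℂ) ∈ Δz ∧ Uz ⊆ U ∧ Δz ⊆ Δ ∧
  AnalyticOnNhd ℂ Ψ (Uz ×ˢ Δz) ∧ (∀ p ∈ Uz ×ˢ Δz, Ψ p ∈ U) ∧
  (∀ w ∈ Uz, Ψ (w, 0) = w) ∧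
  (∀ p ∈ Uz ×ˢ Δz, HasDerivAt (fun s => Ψ (p.1, s)) (B (Ψ p, p.2)) p.2)

/-- The map `(w,t) ↦ (Ψ(w,t), t)` is biholomorphic onto its image. -/
def FlowBihol (n : ℕ) (Uz : Set (Cn n)) (Δz : Set ℂ) (Ψ : Cn n × ℂ → Cn n) : Prop :=
  IsOpen ((fun p : Cn n × ℂ => (Ψ p, p.2)) '' (Uz ×ˢ Δz)) ∧
  ∃ Θ : Cn n × ℂ → Cn n,
    AnalyticOnNhd ℂ Θ ((fun p : Cn n × ℂ => (Ψ p, p.2)) '' (Uz ×ˢ Δz)) ∧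
    ∀ p ∈ Uz ×ˢ Δz, Θ (Ψ p, p.2) = p.1

/-- `φ` maps `V` contactomorphically onto its image inside the contact chart `(U, θ)`. -/
def ContactoOntoImage (m : ℕ) (U : Set (Cn (2*m+1)))
    (θ : Cn (2*m+1) → (Cn (2*m+1) →L[ℂ] ℂ))
    (V : Set (Cn (2*m+1))) (φ : Cn (2*m+1) → Cn (2*m+1)) : Prop :=
  IsOpen (φ '' V) ∧ φ '' V ⊆ U ∧
  ∃ ψ : Cn (2*m+1) → Cn (2*m+1), IsContactoOn m V (φ '' V) θ θ φ ψ

/-- The local contact flow `Ψ^B` of a time-dependent infinitesimal contactomorphism `B`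
at a point `z` (Lemma 5.4 of the paper): properties (a)–(c), biholomorphic onto its
image, and each time-`t` map is contactomorphic onto its image. -/
def IsLocalContactFlow (m : ℕ) (U : Set (Cn (2*m+1)))
    (θ : Cn (2*m+1) → (Cn (2*m+1) →L[ℂ] ℂ)) (Δ : Set ℂ)
    (B : Cn (2*m+1) × ℂ → Cn (2*m+1)) (z : Cn (2*m+1))
    (Uz : Set (Cn (2*m+1))) (Δz : Set ℂ) (Ψ : Cn (2*m+1) × ℂ → Cn (2*m+1)) : Prop :=
  z ∈ Uz ∧ IsFlowABC (2*m+1) U Δ B Uz Δz Ψ ∧ FlowBihol (2*m+1) Uz Δz Ψ ∧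
  ∀ t ∈ Δz, ContactoOntoImage m U θ Uz (fun w => Ψ (w, t))
/-! ### Auxiliary lemmas for Theorem 2.2 (iii) -/

lemma thC_apply' (m : ℕ) (y v : Cn (2*m+1)) :
    thC m y v = (∑ i : Fin m, (y (hi m i) * v (lo m i) - y (lo m i) * v (hi m i)))
      - v (lst m) := by
  simp [thC, ContinuousLinearMap.sum_apply, ContinuousLinearMap.sub_apply,
    ContinuousLinearMap.smul_apply, ContinuousLinearMap.proj_apply, smul_eq_mul]

lemma thC_single_lo (m : ℕ) (y : Cn (2*m+1)) (k : Fin m) :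
    thC m y (Pi.single (lo m k) 1) = y (hi m k) := by
  rw [thC_apply']
  have h1 : ∀ i : Fin m, (Pi.single (lo m k) (1:ℂ) : Cn (2*m+1)) (lo m i)
      = if i = k then 1 else 0 := by
    intro i; rw [Pi.single_apply]
    simp [lo, Fin.ext_iff]
  have h2 : ∀ i : Fin m, (Pi.single (lo m k) (1:ℂ) : Cn (2*m+1)) (hi m i) = 0 := by
    intro i; rw [Pi.single_apply, if_neg]
    have := k.isLt; simp only [lo, hi, Fin.ext_iff]; omega
  have h3 : (Pi.single (lo m k) (1:ℂ) : Cn (2*m+1)) (lst m) = 0 := by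
    rw [Pi.single_apply, if_neg]
    have := k.isLt; simp only [lo, lst, Fin.ext_iff]; omega
  simp [h1, h2, h3, Finset.sum_ite_eq']

lemma thC_single_hi (m : ℕ) (y : Cn (2*m+1)) (k : Fin m) :
    thC m y (Pi.single (hi m k) 1) = -(y (lo m k)) := by
  rw [thC_apply']
  have h1 : ∀ i : Fin m, (Pi.single (hi m k) (1:ℂ) : Cn (2*m+1)) (hi m i)
      = if i = k then 1 else 0 := by
    intro i; rw [Pi.single_apply]
    simp [hi, Fin.ext_iff]
  have h2 : ∀ i : Fin m, (Pi.single (hi m k) (1:ℂ) : Cn (2*m+1)) (lo m i) = 0 := by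
    intro i; rw [Pi.single_apply, if_neg]
    have := i.isLt; simp only [lo, hi, Fin.ext_iff]; omega
  have h3 : (Pi.single (hi m k) (1:ℂ) : Cn (2*m+1)) (lst m) = 0 := by
    rw [Pi.single_apply, if_neg]
    have := k.isLt; simp only [hi, lst, Fin.ext_iff]; omega
  simp [h1, h2, h3, Finset.sum_ite_eq']

lemma thC_single_lst (m : ℕ) (y : Cn (2*m+1)) :
    thC m y (Pi.single (lst m) 1) = -1 := by
  rw [thC_apply']
  have h1 : ∀ i : Fin m, (Pi.single (lst m) (1:ℂ) : Cn (2*m+1)) (lo m i) = 0 := by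
    intro i; rw [Pi.single_apply, if_neg]
    have := i.isLt; simp only [lo, lst, Fin.ext_iff]; omega
  have h2 : ∀ i : Fin m, (Pi.single (lst m) (1:ℂ) : Cn (2*m+1)) (hi m i) = 0 := by
    intro i; rw [Pi.single_apply, if_neg]
    have := i.isLt; simp only [hi, lst, Fin.ext_iff]; omega
  have h3 : (Pi.single (lst m) (1:ℂ) : Cn (2*m+1)) (lst m) = 1 := by
    rw [Pi.single_apply, if_pos rfl]
  simp [h1, h2, h3]

lemma vf_lo (m : ℕ) (f : Cn (2*m+1) → ℂ) (x : Cn (2*m+1)) (k : Fin m) :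
    vf m f x (lo m k) = (pd f (hi m k) x - pd f (lst m) x * x (lo m k)) / 2 := by
  have hk : ((lo m k : Fin (2*m+1)) : ℕ) < m := k.isLt
  simp only [vf]
  rw [dif_pos hk]
  have : (⟨((lo m k : Fin (2*m+1)) : ℕ), hk⟩ : Fin m) = k := by
    apply Fin.ext; rfl
  rw [this]

lemma vf_hi (m : ℕ) (f : Cn (2*m+1) → ℂ) (x : Cn (2*m+1)) (k : Fin m) :
    vf m f x (hi m k) = (-(pd f (lo m k) x) - pd f (lst m) x * x (hi m k)) / 2 := by
  have hk1 : ¬ ((hi m k : Fin (2*m+1)) : ℕ) < m := by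
    simp only [hi]; omega
  have hk2 : ((hi m k : Fin (2*m+1)) : ℕ) < 2*m := by
    have := k.isLt; simp only [hi]; omega
  simp only [vf]
  rw [dif_neg hk1, dif_pos hk2]
  have : (⟨((hi m k : Fin (2*m+1)) : ℕ) - m, by omega⟩ : Fin m) = k := by
    apply Fin.ext; simp [hi]
  rw [this]

lemma vf_lst (m : ℕ) (f : Cn (2*m+1) → ℂ) (x : Cn (2*m+1)) :
    vf m f x (lst m) =
      ((∑ i : Fin m, (pd f (lo m i) x * x (lo m i) + pd f (hi m i) x * x (hi m i)))
        - 2 * f x) / 2 := by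
  have hk1 : ¬ ((lst m : Fin (2*m+1)) : ℕ) < m := by simp only [lst]; omega
  have hk2 : ¬ ((lst m : Fin (2*m+1)) : ℕ) < 2*m := by simp only [lst]; omega
  simp only [vf]
  rw [dif_neg hk1, dif_neg hk2]

lemma clm_apply_eq_sum {n : ℕ} (L : Cn n →L[ℂ] ℂ) (v : Cn n) :
    L v = ∑ j : Fin n, v j * L (Pi.single j 1) := by
  have hv : v = ∑ j : Fin n, v j • (Pi.single j (1:ℂ) : Cn n) := by
    funext i
    simp [Finset.sum_apply, Pi.single_apply, Finset.sum_ite_eq']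
  conv_lhs => rw [hv]
  rw [map_sum]
  simp [smul_eq_mul]

/-- Decomposition of an index of `Fin (2m+1)`. -/
lemma fin_cases3 (m : ℕ) (j : Fin (2*m+1)) :
    (∃ k : Fin m, j = lo m k) ∨ (∃ k : Fin m, j = hi m k) ∨ j = lst m := by
  by_cases h1 : (j : ℕ) < m
  · exact Or.inl ⟨⟨j, h1⟩, Fin.ext rfl⟩
  · by_cases h2 : (j : ℕ) < 2*m
    · refine Or.inr (Or.inl ⟨⟨(j:ℕ) - m, by omega⟩, ?_⟩)
      apply Fin.ext; simp only [hi]; omega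
    · refine Or.inr (Or.inr ?_)
      apply Fin.ext; have := j.isLt; simp only [lst]; omega
/-- **Theorem 2.2 (iii).**
`v^f` is zero at a point `y` of the hypersurface `F = {f = 0}` if and only if
`F` is singular at `y` (i.e. `df_y = 0`) or `θ(T_{F,y}) = 0`. -/
theorem vf_zero_iff_singular_or_theta_vanishes_on_tangent
    (m : ℕ) (U : Set (Cn (2*m+1))) (hU : IsOpen U) (h0U : (0 : Cn (2*m+1)) ∈ U)
    (f : Cn (2*m+1) → ℂ) (hf : AnalyticOnNhd ℂ f U) :
    ∀ y ∈ U, f y = 0 →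
      (vf m f y = 0 ↔
        (fderiv ℂ f y = 0 ∨ ∀ v : Cn (2*m+1), fderiv ℂ f y v = 0 → thC m y v = 0)) := by
  intro y hy hfy
  have hpd : ∀ j : Fin (2*m+1), pd f j y = fderiv ℂ f y (Pi.single j 1) := fun j => rfl
  -- Key reformulation: vf y = 0  ↔  df_y = -r · θ_y  where r = ∂f/∂x_{2m+1}
  have key : vf m f y = 0 ↔
      ∀ v : Cn (2*m+1), fderiv ℂ f y v = -(pd f (lst m) y) * thC m y v := by
    constructor
    · intro h
      have rel1 : ∀ k : Fin m, pd f (hi m k) y = pd f (lst m) y * y (lo m k) := by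
        intro k
        have h1 := congrFun h (lo m k)
        rw [vf_lo, Pi.zero_apply, div_eq_zero_iff] at h1
        rcases h1 with h1 | h1
        · linear_combination h1
        · exact absurd h1 two_ne_zero
      have rel2 : ∀ k : Fin m, pd f (lo m k) y = -(pd f (lst m) y * y (hi m k)) := by
        intro k
        have h1 := congrFun h (hi m k)
        rw [vf_hi, Pi.zero_apply, div_eq_zero_iff] at h1
        rcases h1 with h1 | h1
        · linear_combination -h1
        · exact absurd h1 two_ne_zero
      have hb : ∀ j : Fin (2*m+1),
          fderiv ℂ f y (Pi.single j 1) = -(pd f (lst m) y) * thC m y (Pi.single j 1) := by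
        intro j
        rcases fin_cases3 m j with ⟨k, rfl⟩ | ⟨k, rfl⟩ | rfl
        · rw [← hpd, thC_single_lo, rel2 k]; ring
        · rw [← hpd, thC_single_hi, rel1 k]; ring
        · rw [← hpd, thC_single_lst]; ring
      intro v
      rw [clm_apply_eq_sum (fderiv ℂ f y) v, clm_apply_eq_sum (thC m y) v, Finset.mul_sum]
      exact Finset.sum_congr rfl fun j _ => by rw [hb j]; ring
    · intro h
      have rel1 : ∀ k : Fin m, pd f (hi m k) y = pd f (lst m) y * y (lo m k) := by
        intro k
        have h1 := h (Pi.single (hi m k) 1)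
        rw [← hpd, thC_single_hi] at h1
        rw [h1]; ring
      have rel2 : ∀ k : Fin m, pd f (lo m k) y = -(pd f (lst m) y * y (hi m k)) := by
        intro k
        have h1 := h (Pi.single (lo m k) 1)
        rw [← hpd, thC_single_lo] at h1
        rw [h1]; ring
      funext j
      rcases fin_cases3 m j with ⟨k, rfl⟩ | ⟨k, rfl⟩ | rfl
      · rw [vf_lo, rel1 k, Pi.zero_apply]; ring
      · rw [vf_hi, rel2 k, Pi.zero_apply]; ring
      · rw [vf_lst, hfy, Pi.zero_apply]
        have hsum : ∀ i : Fin m,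
            pd f (lo m i) y * y (lo m i) + pd f (hi m i) y * y (hi m i) = 0 := by
          intro i; rw [rel1 i, rel2 i]; ring
        rw [Finset.sum_congr rfl fun i _ => hsum i]
        simp
  rw [key]
  constructor
  · intro h
    by_cases hr0 : pd f (lst m) y = 0
    · left
      apply ContinuousLinearMap.ext
      intro v
      rw [ContinuousLinearMap.zero_apply, h v, hr0]
      ring
    · right
      intro v hv
      have h1 := h v
      rw [hv] at h1
      have h2 : pd f (lst m) y * thC m y v = 0 := by linear_combination h1
      rcases mul_eq_zero.mp h2 with h3 | h3
      · exact absurd h3 hr0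
      · exact h3
  · rintro (h0 | hker)
    · have hr : pd f (lst m) y = 0 := by rw [hpd, h0]; rfl
      intro v
      rw [h0, hr]
      simp
    · by_cases hL0 : fderiv ℂ f y = 0
      · have hr : pd f (lst m) y = 0 := by rw [hpd, hL0]; rfl
        intro v
        rw [hL0, hr]
        simp
      · obtain ⟨u, hu⟩ : ∃ u, fderiv ℂ f y u ≠ 0 := by
          by_contra hcon
          push_neg at hcon
          exact hL0 (ContinuousLinearMap.ext fun v => by rw [hcon v]; rfl)
        have hc : ∀ v, thC m y v = (thC m y u / fderiv ℂ f y u) * fderiv ℂ f y v := by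
          intro v
          have hk : fderiv ℂ f y (v - (fderiv ℂ f y v / fderiv ℂ f y u) • u) = 0 := by
            rw [map_sub, map_smul, smul_eq_mul]
            field_simp
            ring
          have ht := hker _ hk
          rw [map_sub, map_smul, smul_eq_mul] at ht
          have ht' : thC m y v = (fderiv ℂ f y v / fderiv ℂ f y u) * thC m y u := by
            linear_combination ht
          rw [ht']
          field_simp
        have hcr : (thC m y u / fderiv ℂ f y u) * pd f (lst m) y = -1 := by
          have h1 := hc (Pi.single (lst m) 1)
          rw [thC_single_lst, ← hpd] at h1
          linear_combination -h1
        intro v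
        rw [hc v]
        linear_combination (fderiv ℂ f y v) * hcr
end

section
/- Let U be a neighborhood of 0 ∈ ℂ^{2m+1} with the standard contact form θ, f a holomorphic function on U, F ⊂ U the hypersurface f = 0, and v^f the associated vector field. For any nonsingular point y ∈ F and any tangent vector w ∈ T_{F,y} satisfying θ(w) = 0, we have dθ(v^f(y), w) = 0. -/
open Set Function

-- aux
theorem sum_split_nat' (m : ℕ) (g : ℕ → ℂ) :
    ∑ j ∈ Finset.range (2*m+1), g j
      = (∑ i ∈ Finset.range m, g i) + (∑ i ∈ Finset.range m, g (m+i)) + g (2*m) := by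
  rw [Finset.sum_range_succ]
  congr 1
  rw [Finset.range_eq_Ico, ← Finset.sum_Ico_consecutive g (Nat.zero_le m) (by omega : m ≤ 2*m),
    Finset.sum_Ico_eq_sum_range, Finset.sum_Ico_eq_sum_range]
  have h : 2*m - m = m := by omega
  rw [h]
  simp

theorem sum_split_fin' (m : ℕ) (g : Fin (2*m+1) → ℂ) :
    ∑ j, g j = (∑ i : Fin m, g (lo m i)) + (∑ i : Fin m, g (hi m i)) + g (lst m) := by
  set G : ℕ → ℂ := fun j => if h : j < 2*m+1 then g ⟨j, h⟩ else 0 with hG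
  have h1 : ∑ j, g j = ∑ j ∈ Finset.range (2*m+1), G j := by
    rw [← Fin.sum_univ_eq_sum_range]
    exact Finset.sum_congr rfl fun j _ => by have := j.isLt; simp [hG, j.isLt]; intro h; omega
  have h2 : ∑ i ∈ Finset.range m, G i = ∑ i : Fin m, g (lo m i) := by
    rw [← Fin.sum_univ_eq_sum_range (fun i => G i) m]
    refine Finset.sum_congr rfl fun i _ => ?_
    simp only [hG]
    rw [dif_pos (by have := i.isLt; omega)]
    rfl
  have h3 : ∑ i ∈ Finset.range m, G (m+i) = ∑ i : Fin m, g (hi m i) := by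
    rw [← Fin.sum_univ_eq_sum_range (fun i => G (m+i)) m]
    refine Finset.sum_congr rfl fun i _ => ?_
    simp only [hG]
    rw [dif_pos (by have := i.isLt; omega)]
    rfl
  have h4 : G (2*m) = g (lst m) := by
    simp only [hG]
    rw [dif_pos (by omega)]
    rfl
  rw [h1, sum_split_nat', h2, h3, h4]


/-- **Theorem 2.2 (vi).**
For any nonsingular point `y` of the hypersurface `F = {f = 0}` and any tangent vector
`w ∈ T_{F,y}` with `θ(w) = 0`, we have `dθ(v^f(y), w) = 0`. -/
theorem dtheta_vf_vanishes_on_contact_tangent_vectors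
    (m : ℕ) (U : Set (Cn (2*m+1))) (hU : IsOpen U) (h0U : (0 : Cn (2*m+1)) ∈ U)
    (f : Cn (2*m+1) → ℂ) (hf : AnalyticOnNhd ℂ f U) :
    ∀ y ∈ U, f y = 0 → fderiv ℂ f y ≠ 0 →
      ∀ w : Cn (2*m+1), fderiv ℂ f y w = 0 → thC m y w = 0 →
        dthC m (vf m f y) w = 0 := by
  intro y hy _ _ w hdfw hthw
  -- expansion of fderiv
  have hexp : fderiv ℂ f y w = ∑ j, w j * pd f j y := by
    conv_lhs => rw [← Finset.univ_sum_single w]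
    rw [map_sum]
    refine Finset.sum_congr rfl fun j _ => ?_
    have h : Pi.single j (w j) = w j • (Pi.single j 1 : Cn (2*m+1)) := by
      rw [← Pi.single_smul, smul_eq_mul, mul_one]
    rw [h, map_smul, smul_eq_mul]
    rfl
  have hdf : (∑ i : Fin m, w (lo m i) * pd f (lo m i) y)
      + (∑ i : Fin m, w (hi m i) * pd f (hi m i) y)
      + w (lst m) * pd f (lst m) y = 0 := by
    rw [← sum_split_fin' m (fun j => w j * pd f j y), ← hexp, hdfw]
  have hth : (∑ i : Fin m, (y (hi m i) * w (lo m i) - y (lo m i) * w (hi m i)))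
      - w (lst m) = 0 := by
    rw [← hthw]
    simp [thC, ContinuousLinearMap.sum_apply, smul_eq_mul]
  -- values of vf
  have hvhi : ∀ i : Fin m, vf m f y (hi m i)
      = (-(pd f (lo m i) y) - pd f (lst m) y * y (hi m i)) / 2 := by
    intro i
    have hn : ¬ ((hi m i : ℕ) < m) := by simp [hi]
    have hp : ((hi m i : ℕ) < 2*m) := by have := i.isLt; simp [hi]; omega
    simp only [vf]
    rw [dif_neg hn, dif_pos hp]
    try simp [hi, lo]
  have hvlo : ∀ i : Fin m, vf m f y (lo m i)
      = (pd f (hi m i) y - pd f (lst m) y * y (lo m i)) / 2 := by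
    intro i
    have hp : ((lo m i : ℕ) < m) := by simp [lo]
    simp only [vf]
    rw [dif_pos hp]
    try simp [hi, lo]
  -- conclude
  rw [dthC]
  have key : ∑ i : Fin m, (vf m f y (hi m i) * w (lo m i) - vf m f y (lo m i) * w (hi m i))
      = (-(1:ℂ)/2) * (∑ i : Fin m, w (lo m i) * pd f (lo m i) y)
        + (-(1:ℂ)/2) * (∑ i : Fin m, w (hi m i) * pd f (hi m i) y)
        + (-(pd f (lst m) y)/2) * (∑ i : Fin m, (y (hi m i) * w (lo m i) - y (lo m i) * w (hi m i))) := by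
    simp only [Finset.mul_sum, ← Finset.sum_add_distrib]
    refine Finset.sum_congr rfl fun i _ => ?_
    rw [hvhi i, hvlo i]
    ring
  rw [key]
  set S1 := ∑ i : Fin m, w (lo m i) * pd f (lo m i) y
  set S2 := ∑ i : Fin m, w (hi m i) * pd f (hi m i) y
  set S3 := ∑ i : Fin m, (y (hi m i) * w (lo m i) - y (lo m i) * w (hi m i))
  linear_combination -hdf - pd f (lst m) y * hth
end

section
/- Let (V,ω) be a symplectic vector space of dimension 2m with symplectic coordinates (y_1,…,y_{2m}) satisfying ω(∂/∂y_{m+i}, ∂/∂y_j) = δ_{ij} for 1 ≤ i,j ≤ m. For a homogeneous quadratic polynomial q(y_1,…,y_{2m}), let ω†(q) be the vector field on ℙV induced by the linear vector field ω†(q) = Σ_{k=1}^m ((∂q/∂y_{m+k}) ∂/∂y_k − (∂q/∂y_k) ∂/∂y_{m+k}). Let ℙY be a Legendrian subvariety of (ℙV, D^ω), i.e. the projectivization of a Lagrangian cone Y ⊂ V. Then the vector field ω†(q) is tangent to ℙY ⊂ ℙV if and only if Y is contained in the quadric hypersurface q = 0. -/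
open Set Function

/-! ## Auxiliary lemmas for Proposition 3.12 -/

noncomputable def pB {n : ℕ} (Q : QuadraticForm ℂ (Cn n)) : Cn n →L[ℂ] Cn n →L[ℂ] ℂ :=
  LinearMap.toContinuousLinearMap
    (((LinearMap.toContinuousLinearMap : (Cn n →ₗ[ℂ] ℂ) ≃ₗ[ℂ] _).toLinearMap) ∘ₗ Q.polarBilin)

lemma pB_apply {n : ℕ} (Q : QuadraticForm ℂ (Cn n)) (x v : Cn n) :
    pB Q x v = QuadraticMap.polar ⇑Q x v := rfl

noncomputable def DQ {n : ℕ} (Q : QuadraticForm ℂ (Cn n)) (y : Cn n) : Cn n →L[ℂ] ℂ :=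
  (2⁻¹:ℂ) • (pB Q y + (pB Q).flip y)

lemma DQ_apply {n : ℕ} (Q : QuadraticForm ℂ (Cn n)) (y v : Cn n) :
    DQ Q y v = QuadraticMap.polar ⇑Q y v := by
  simp only [DQ, ContinuousLinearMap.smul_apply, ContinuousLinearMap.add_apply,
    ContinuousLinearMap.flip_apply, pB_apply, smul_eq_mul]
  rw [QuadraticMap.polar_comm (⇑Q) v y]
  ring

lemma Q_eq {n : ℕ} (Q : QuadraticForm ℂ (Cn n)) :
    ⇑Q = fun x => (2⁻¹:ℂ) • (pB Q x x) := by
  funext x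
  have h : QuadraticMap.polar (⇑Q) x x = 2 • Q x := Q.polar_self x
  rw [← pB_apply Q x x] at h
  simp only [smul_eq_mul]
  rw [h]
  simp

lemma hasFDerivQ {n : ℕ} (Q : QuadraticForm ℂ (Cn n)) (y : Cn n) :
    HasFDerivAt ⇑Q (DQ Q y) y := by
  rw [Q_eq Q]
  have h1 : HasFDerivAt (fun x : Cn n => (pB Q) x x) (pB Q y + (pB Q).flip y) y := by
    have := ((pB Q).hasFDerivAt (x := y)).clm_apply (hasFDerivAt_id y)
    simpa using this
  exact h1.const_smul (2⁻¹:ℂ)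

lemma analyticQ {n : ℕ} (Q : QuadraticForm ℂ (Cn n)) :
    AnalyticOnNhd ℂ ⇑Q univ := by
  intro x _
  rw [Q_eq Q]
  have hd : AnalyticAt ℂ (fun y : Cn n => (y, y)) x := analyticAt_id.prod analyticAt_id
  have h : AnalyticAt ℂ (fun x : Cn n => (pB Q) x x) x := by
    have := AnalyticAt.comp (f := fun y : Cn n => (y, y)) ((pB Q).analyticAt_bilinear (x, x)) hd
    exact this
  have h2 : AnalyticAt ℂ (fun _ : Cn n => (2⁻¹:ℂ)) x := analyticAt_const
  exact h2.smul h

lemma sum_split (m : ℕ) (f : Fin (2*m) → ℂ) :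
    ∑ j, f j = ∑ i : Fin m, (f (lo2 m i) + f (hi2 m i)) := by
  rw [Finset.sum_add_distrib]
  rw [← Equiv.sum_comp (finSumFinEquiv.trans (finCongr (two_mul m).symm)) f]
  rw [Fintype.sum_sum_type]
  congr 1

lemma polar_sum {m : ℕ} (Q : QuadraticForm ℂ (Cn (2*m))) (x v : Cn (2*m)) :
    QuadraticMap.polar (⇑Q) x v
      = ∑ j, v j * QuadraticMap.polar (⇑Q) x (Pi.single j 1) := by
  have hv : v = ∑ j, v j • (Pi.single j 1 : Cn (2*m)) := by
    funext k
    rw [Finset.sum_apply]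
    rw [Finset.sum_eq_single k]
    · simp
    · intro b _ hb; simp [Pi.single_apply, hb.symm]
    · simp
  conv_lhs => rw [hv]
  rw [show QuadraticMap.polar (⇑Q) x (∑ j, v j • (Pi.single j 1 : Cn (2*m)))
      = (Q.polarBilin x) (∑ j, v j • (Pi.single j 1 : Cn (2*m))) from rfl]
  rw [map_sum]
  apply Finset.sum_congr rfl
  intro j _
  rw [map_smul]
  simp [QuadraticMap.polarBilin]

lemma omDag_lo {m : ℕ} (Q : QuadraticForm ℂ (Cn (2*m))) (x : Cn (2*m)) (i : Fin m) :
    omDag m Q x (lo2 m i) = QuadraticMap.polar (⇑Q) x (Pi.single (hi2 m i) 1) := by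
  have h : ((lo2 m i : Fin (2*m)) : ℕ) < m := i.isLt
  simp only [omDag, dif_pos h]
  congr 1

lemma omDag_hi {m : ℕ} (Q : QuadraticForm ℂ (Cn (2*m))) (x : Cn (2*m)) (i : Fin m) :
    omDag m Q x (hi2 m i) = - QuadraticMap.polar (⇑Q) x (Pi.single (lo2 m i) 1) := by
  have h : ¬ ((hi2 m i : Fin (2*m)) : ℕ) < m := by simp [hi2]
  simp only [omDag, dif_neg h]
  congr! 3
  apply Fin.ext
  simp [hi2]

lemma omS_omDag {m : ℕ} (Q : QuadraticForm ℂ (Cn (2*m))) (x v : Cn (2*m)) :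
    omS m (omDag m Q x) v = -2 * QuadraticMap.polar (⇑Q) x v := by
  rw [omS, polar_sum Q x v, sum_split m (fun j => v j * QuadraticMap.polar (⇑Q) x (Pi.single j 1))]
  have hc : ∀ i ∈ Finset.univ, (omDag m Q x (hi2 m i) * v (lo2 m i)
      - omDag m Q x (lo2 m i) * v (hi2 m i))
      = -((v (lo2 m i) * QuadraticMap.polar (⇑Q) x (Pi.single (lo2 m i) 1))
        + (v (hi2 m i) * QuadraticMap.polar (⇑Q) x (Pi.single (hi2 m i) 1))) := by
    intro i _
    rw [omDag_lo, omDag_hi]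
    ring
  rw [Finset.sum_congr rfl hc, Finset.sum_neg_distrib]
  ring

noncomputable def OB (m : ℕ) : LinearMap.BilinForm ℂ (Cn (2*m)) :=
  LinearMap.mk₂ ℂ (omS m)
    (fun a a' b => by
      simp only [omS, Pi.add_apply]
      rw [← mul_add, ← Finset.sum_add_distrib]
      exact congrArg _ (Finset.sum_congr rfl fun i _ => by ring))
    (fun c a b => by
      simp only [omS, Pi.smul_apply, smul_eq_mul]
      have h : ∑ i : Fin m, (c * a (hi2 m i) * b (lo2 m i) - c * a (lo2 m i) * b (hi2 m i))
          = c * ∑ i : Fin m, (a (hi2 m i) * b (lo2 m i) - a (lo2 m i) * b (hi2 m i)) := by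
        rw [Finset.mul_sum]
        exact Finset.sum_congr rfl fun i _ => by ring
      rw [h]
      ring)
    (fun a b b' => by
      simp only [omS, Pi.add_apply]
      rw [← mul_add, ← Finset.sum_add_distrib]
      exact congrArg _ (Finset.sum_congr rfl fun i _ => by ring))
    (fun c a b => by
      simp only [omS, Pi.smul_apply, smul_eq_mul]
      have h : ∑ i : Fin m, (a (hi2 m i) * (c * b (lo2 m i)) - a (lo2 m i) * (c * b (hi2 m i)))
          = c * ∑ i : Fin m, (a (hi2 m i) * b (lo2 m i) - a (lo2 m i) * b (hi2 m i)) := by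
        rw [Finset.mul_sum]
        exact Finset.sum_congr rfl fun i _ => by ring
      rw [h]
      ring)

lemma OB_apply (m : ℕ) (a b : Cn (2*m)) : OB m a b = omS m a b := rfl

lemma OB_alt (m : ℕ) : (OB m).IsAlt := by
  intro a
  rw [OB_apply]
  simp [omS, mul_comm]

lemma OB_refl (m : ℕ) : (OB m).IsRefl := (OB_alt m).isRefl

lemma omS_skew (m : ℕ) (a b : Cn (2*m)) : omS m a b = - omS m b a := by
  simp only [omS]
  rw [← neg_mul, neg_mul_comm, ← Finset.sum_neg_distrib]
  exact congrArg _ (Finset.sum_congr rfl fun i _ => by ring)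

lemma lo2_ne_hi2 (m : ℕ) (i k : Fin m) : hi2 m k ≠ lo2 m i := by
  intro h
  have := congrArg Fin.val h
  simp [lo2, hi2] at this
  omega

lemma omS_single_lo (m : ℕ) (u : Cn (2*m)) (i : Fin m) :
    omS m u (Pi.single (lo2 m i) 1) = 2 * u (hi2 m i) := by
  simp only [omS]
  congr 1
  rw [Finset.sum_eq_single_of_mem i (Finset.mem_univ i)]
  · rw [Pi.single_eq_same, Pi.single_eq_of_ne (lo2_ne_hi2 m i i)]
    ring
  · intro k _ hk
    have h1 : lo2 m k ≠ lo2 m i := fun h => hk (Fin.ext (by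
      have := congrArg Fin.val h; simpa [lo2] using this))
    rw [Pi.single_eq_of_ne h1, Pi.single_eq_of_ne (lo2_ne_hi2 m i k)]
    ring

lemma hi2_inj_ne (m : ℕ) (i k : Fin m) (hk : k ≠ i) : hi2 m k ≠ hi2 m i := by
  intro h
  have := congrArg Fin.val h
  simp [hi2] at this
  exact hk (Fin.ext (by omega))

lemma omS_single_hi (m : ℕ) (u : Cn (2*m)) (i : Fin m) :
    omS m u (Pi.single (hi2 m i) 1) = -2 * u (lo2 m i) := by
  simp only [omS]
  have h : ∑ k : Fin m,
      (u (hi2 m k) * (Pi.single (hi2 m i) 1 : Cn (2*m)) (lo2 m k)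
        - u (lo2 m k) * (Pi.single (hi2 m i) 1 : Cn (2*m)) (hi2 m k))
      = - u (lo2 m i) := by
    rw [Finset.sum_eq_single_of_mem i (Finset.mem_univ i)]
    · rw [Pi.single_eq_same, Pi.single_eq_of_ne (Ne.symm (lo2_ne_hi2 m i i))]
      ring
    · intro k _ hk
      have h1 : lo2 m k ≠ hi2 m i := Ne.symm (lo2_ne_hi2 m k i)
      rw [Pi.single_eq_of_ne h1, Pi.single_eq_of_ne (hi2_inj_ne m i k hk)]
      ring
  rw [h]
  ring

lemma OB_nondeg (m : ℕ) : (OB m).Nondegenerate := by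
  refine LinearMap.BilinForm.Nondegenerate.ofSeparatingLeft ?_
  intro u hu
  funext j
  have hj := j.isLt
  by_cases h : (j : ℕ) < m
  · have := hu (Pi.single (hi2 m ⟨j, h⟩) 1)
    rw [OB_apply, omS_single_hi] at this
    have hj2 : lo2 m ⟨j, h⟩ = j := Fin.ext rfl
    rw [hj2] at this
    have h2 : u j = 0 := by linear_combination (-1/2 : ℂ) * this
    simpa using h2
  · have hjm : (j : ℕ) - m < m := by omega
    have := hu (Pi.single (lo2 m ⟨(j : ℕ) - m, hjm⟩) 1)
    rw [OB_apply, omS_single_lo] at this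
    have hj2 : hi2 m ⟨(j : ℕ) - m, hjm⟩ = j := Fin.ext (by simp [hi2]; omega)
    rw [hj2] at this
    have h2 : u j = 0 := by linear_combination (1/2 : ℂ) * this
    simpa using h2

lemma ortho_mem {m : ℕ} (K : Submodule ℂ (Cn (2*m))) (hK : Module.finrank ℂ K = m)
    (hiso : ∀ u ∈ K, ∀ v ∈ K, omS m u v = 0) (w : Cn (2*m))
    (hw : ∀ v ∈ K, omS m w v = 0) : w ∈ K := by
  set W := (OB m).orthogonal K with hWdef
  have hKW : K ≤ W := by
    intro x hx
    rw [LinearMap.BilinForm.mem_orthogonal_iff]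
    intro n hn
    exact hiso n hn x hx
  have hfr : Module.finrank ℂ (Cn (2*m)) = 2*m := by
    rw [Module.finrank_pi]
    simp
  have hWr : Module.finrank ℂ W = m := by
    rw [hWdef, LinearMap.BilinForm.finrank_orthogonal (OB_nondeg m) K, hfr, hK]
    omega
  have hEq : K = W := Submodule.eq_of_le_of_finrank_le hKW (by rw [hWr, hK])
  rw [hEq]
  rw [LinearMap.BilinForm.mem_orthogonal_iff]
  intro n hn
  show OB m n w = 0
  rw [OB_apply, omS_skew m n w, hw n hn, neg_zero]

lemma eval_smul_homog {n : ℕ} (P : MvPolynomial (Fin n) ℂ) (d : ℕ)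
    (hP : P.IsHomogeneous d) (t : ℂ) (y : Cn n) :
    MvPolynomial.eval (t • y) P = t ^ d * MvPolynomial.eval y P := by
  rw [MvPolynomial.eval_eq, MvPolynomial.eval_eq, Finset.mul_sum]
  apply Finset.sum_congr rfl
  intro s hs
  have hd : ∑ i ∈ s.support, s i = d := by
    have h := hP (MvPolynomial.mem_support_iff.mp hs)
    rw [← h, Finsupp.weight_apply]
    simp [Finsupp.sum, mul_comm]
  have : ∏ i ∈ s.support, (t • y) i ^ s i
      = t ^ d * ∏ i ∈ s.support, y i ^ s i := by
    rw [← hd, ← Finset.prod_pow_eq_pow_sum, ← Finset.prod_mul_distrib]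
    apply Finset.prod_congr rfl
    intro i _
    rw [Pi.smul_apply, smul_eq_mul, mul_pow]
  rw [this]
  ring

lemma cone_smul {m : ℕ} {Y : Set (Cn (2*m))}
    (hY : ∃ S : Set (MvPolynomial (Fin (2*m)) ℂ),
      (∀ P ∈ S, ∃ d, MvPolynomial.IsHomogeneous P d) ∧
      Y = {y : Cn (2*m) | ∀ P ∈ S, MvPolynomial.eval y P = 0})
    {y : Cn (2*m)} (hy : y ∈ Y) (t : ℂ) : t • y ∈ Y := by
  obtain ⟨S, hS, rfl⟩ := hY
  intro P hP
  obtain ⟨d, hd⟩ := hS P hP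
  rw [eval_smul_homog P d hd t y, hy P hP, mul_zero]

lemma euler_mem_zTang {m : ℕ} {Y : Set (Cn (2*m))}
    (hcone : ∀ ⦃y⦄, y ∈ Y → ∀ t : ℂ, t • y ∈ Y)
    {x : Cn (2*m)} (hx : x ∈ Y) : x ∈ zTang Y x := by
  intro V g hVo hxV hg hvan
  have hc : Continuous (fun t : ℂ => t • x) := by continuity
  have hmem : ∀ᶠ t in nhds (1:ℂ), (fun t : ℂ => t • x) t ∈ V := by
    have : (fun t : ℂ => t • x) 1 ∈ V := by simpa using hxV
    exact hc.continuousAt.eventually_mem (hVo.mem_nhds this)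
  have heq : (fun t : ℂ => g (t • x)) =ᶠ[nhds 1] (fun _ => (0:ℂ)) := by
    filter_upwards [hmem] with t ht
    exact hvan _ ⟨hcone hx t, ht⟩
  have hder : HasDerivAt (fun t : ℂ => g (t • x)) (fderiv ℂ g x x) 1 := by
    have h1 : HasDerivAt (fun t : ℂ => t • x) ((1:ℂ) • x) 1 := (hasDerivAt_id 1).smul_const x
    have h2 : HasFDerivAt g (fderiv ℂ g x) ((1:ℂ) • x) := by
      simpa using ((hg x hxV).differentiableAt.hasFDerivAt)
    have := h2.comp_hasDerivAt 1 h1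
    simpa [Function.comp_def] using this
  have hzero : HasDerivAt (fun t : ℂ => g (t • x)) 0 1 :=
    (hasDerivAt_const 1 (0:ℂ)).congr_of_eventuallyEq heq
  exact (hder.unique hzero)

lemma ker_subset_zTang {n c : ℕ} {Z : Set (Cn n)} {y : Cn n}
    {V : Set (Cn n)} {g : Cn n → Cn c} (hVo : IsOpen V) (hyV : y ∈ V)
    (hg : AnalyticOnNhd ℂ g V) (hZV : Z ∩ V = {z | z ∈ V ∧ g z = 0})
    (hsurj : Function.Surjective ⇑(fderiv ℂ g y)) (hyZ : y ∈ Z)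
    {v : Cn n} (hv : v ∈ (fderiv ℂ g y).ker) : v ∈ zTang Z y := by
  intro W h hWo hyW hh hvan
  set f' := fderiv ℂ g y with hf'
  have hst : HasStrictFDerivAt g f' y := (hg y hyV).hasStrictFDerivAt
  have hrange : f'.range = ⊤ := LinearMap.range_eq_top.mpr hsurj
  set φ := hst.implicitFunction g f' hrange with hφ
  have hG0 : φ (g y) 0 = y := hst.implicitFunction_apply_image hrange
  have hGder : HasStrictFDerivAt (φ (g y)) (f'.ker).subtypeL 0 :=
    hst.to_implicitFunction hrange
  have hGcont : ContinuousAt (φ (g y)) 0 := hGder.continuousAt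
  have hgy0 : g y = 0 := by
    have hmem : y ∈ Z ∩ V := ⟨hyZ, hyV⟩
    rw [hZV] at hmem
    exact hmem.2
  have hmapev : ∀ᶠ (z : f'.ker) in nhds 0, g (φ (g y) z) = g y := by
    have h1 := hst.map_implicitFunction_eq hrange
    have h2 : Filter.Tendsto (fun z : f'.ker => ((g y), z))
        (nhds (0 : f'.ker)) (nhds (g y, (0 : f'.ker))) :=
      by
        rw [nhds_prod_eq]
        exact ((tendsto_const_nhds : Filter.Tendsto (fun _ : f'.ker => g y)
          (nhds 0) (nhds (g y))).prodMk Filter.tendsto_id)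
    exact h2.eventually h1
  have hmemV : ∀ᶠ z in nhds (0 : f'.ker), φ (g y) z ∈ V := by
    apply hGcont.eventually_mem (hVo.mem_nhds _)
    rw [hG0]; exact hyV
  have hmemW : ∀ᶠ z in nhds (0 : f'.ker), φ (g y) z ∈ W := by
    apply hGcont.eventually_mem (hWo.mem_nhds _)
    rw [hG0]; exact hyW
  have hzero : (fun z => h (φ (g y) z)) =ᶠ[nhds (0 : f'.ker)] (fun _ => (0:ℂ)) := by
    filter_upwards [hmapev, hmemV, hmemW] with z h1 h2 h3
    have hZmem : φ (g y) z ∈ Z ∩ V := by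
      rw [hZV]
      exact ⟨h2, by rw [h1, hgy0]⟩
    exact hvan _ ⟨hZmem.1, h3⟩
  have hh2 : HasStrictFDerivAt h (fderiv ℂ h y) (φ (g y) 0) := by
    rw [hG0]
    exact (hh y hyW).hasStrictFDerivAt
  have hcomp := hh2.comp (0 : f'.ker) hGder
  have hfd : fderiv ℂ (fun z => h (φ (g y) z)) 0
      = (fderiv ℂ h y).comp (f'.ker).subtypeL := hcomp.hasFDerivAt.fderiv
  have hfd0 : fderiv ℂ (fun z => h (φ (g y) z)) 0 = 0 := by
    rw [hzero.fderiv_eq]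
    exact fderiv_const_apply 0
  have hfin : (fderiv ℂ h y).comp (f'.ker).subtypeL = 0 := by
    rw [← hfd, hfd0]
  have := congrArg (fun (L : (f'.ker) →L[ℂ] ℂ) => L ⟨v, hv⟩) hfin
  simpa using this

lemma finrank_ker_eq {n c : ℕ} (f' : Cn n →L[ℂ] Cn c)
    (hsurj : Function.Surjective ⇑f') :
    Module.finrank ℂ (f'.ker) = n - c := by
  have h := LinearMap.finrank_range_add_finrank_ker (f' : Cn n →ₗ[ℂ] Cn c)
  have hr : LinearMap.range (f' : Cn n →ₗ[ℂ] Cn c) = ⊤ := LinearMap.range_eq_top.mpr hsurj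
  rw [hr] at h
  have h1 : Module.finrank ℂ (Cn n) = n := by rw [Module.finrank_pi]; simp
  have h2 : Module.finrank ℂ (Cn c) = c := by rw [Module.finrank_pi]; simp
  rw [finrank_top, h1, h2] at h
  rw [show LinearMap.ker (f' : Cn n →ₗ[ℂ] Cn c) = f'.ker from rfl] at h
  omega



lemma stepS {m : ℕ} {Q : QuadraticForm ℂ (Cn (2*m))} {Y : Set (Cn (2*m))}
    (hY : IsLagrangianCone m Y) (hQ0 : ∀ y ∈ Y, Q y = 0)
    {y : Cn (2*m)} (hy : SmoothPt m Y y) : omDag m Q y ∈ zTang Y y := by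
  obtain ⟨hyY, V, g, hVo, hyV, hg, hZV, hsurj⟩ := hy
  set K := (fderiv ℂ g y).ker with hK
  have hKz : ∀ v ∈ K, v ∈ zTang Y y := fun v hv =>
    ker_subset_zTang hVo hyV hg hZV hsurj hyY hv
  have hfr : Module.finrank ℂ K = m := by
    rw [hK, finrank_ker_eq _ hsurj]
    omega
  have hpolar : ∀ v ∈ K, QuadraticMap.polar (⇑Q) y v = 0 := by
    intro v hv
    have hz := hKz v hv univ ⇑Q isOpen_univ (mem_univ y) (analyticQ Q)
      (fun z hz => hQ0 z hz.1)
    rw [(hasFDerivQ Q y).fderiv] at hz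
    rw [← DQ_apply Q y v]
    exact hz
  have hsm : SmoothPt m Y y := ⟨hyY, V, g, hVo, hyV, hg, hZV, hsurj⟩
  have hiso : ∀ u ∈ K, ∀ v ∈ K, omS m u v = 0 := fun u hu v hv =>
    hY.2.2 y hsm u (hKz u hu) v (hKz v hv)
  have hw : ∀ v ∈ K, omS m (omDag m Q y) v = 0 := by
    intro v hv
    rw [omS_omDag, hpolar v hv]
    ring
  exact hKz _ (ortho_mem K hfr hiso _ hw)

/-- **Proposition 3.12 (Proposition `p.QL`).**
Let `(ℂ^{2m}, ω)` be the standard symplectic vector space, `q` a homogeneous quadratic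
polynomial, and `ω†(q)` the associated linear vector field.  Let `ℙY` be a Legendrian
subvariety of `(ℙV, D^ω)`, i.e. the projectivization of a Lagrangian cone `Y ⊆ V`.
Then the vector field `ω†(q)` is tangent to `ℙY ⊆ ℙV` (equivalently, the linear field
is tangent to the cone `Y ∖ {0}`) if and only if `Y` is contained in the quadric
hypersurface `q = 0`. -/
theorem omega_dagger_tangent_iff_quadric_contains_cone
    (m : ℕ) (Q : QuadraticForm ℂ (Cn (2*m))) (Y : Set (Cn (2*m)))
    (hY : IsLagrangianCone m Y) :
    (∀ x ∈ Y, x ≠ 0 → omDag m Q x ∈ zTang Y x) ↔ (∀ y ∈ Y, Q y = 0) := by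
  constructor
  · -- tangency implies the quadric contains the cone
    intro htan y hyY
    have hcone : ∀ ⦃z : Cn (2*m)⦄, z ∈ Y → ∀ t : ℂ, t • z ∈ Y :=
      fun z hz t => cone_smul hY.1 hz t
    have hS : ∀ z, SmoothPt m Y z → Q z = 0 := by
      intro z hz
      by_cases h0 : z = 0
      · rw [h0]
        exact QuadraticMap.map_zero Q
      · have h1 := htan z hz.1 h0
        have h2 : z ∈ zTang Y z := euler_mem_zTang hcone hz.1
        have h3 := hY.2.2 z hz _ h1 _ h2
        rw [omS_omDag] at h3
        have h4 : QuadraticMap.polar (⇑Q) z z = 2 • Q z := Q.polar_self z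
        rw [h4, nsmul_eq_mul] at h3
        push_cast at h3
        linear_combination (-1/4 : ℂ) * h3
    have hQc : Continuous ⇑Q :=
      continuous_iff_continuousAt.mpr fun x => (analyticQ Q x (mem_univ x)).continuousAt
    have hclosed : IsClosed {z : Cn (2*m) | Q z = 0} := isClosed_eq hQc continuous_const
    exact closure_minimal (fun z hz => hS z hz) hclosed (hY.2.1 y hyY)
  · -- the cone inside the quadric implies tangency
    intro hQ0 x hxY _
    intro V g hVo hxV hg hvan
    have hp : ∀ e, Continuous (fun z : Cn (2*m) => QuadraticMap.polar (⇑Q) z e) := by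
      intro e
      have he : (fun z : Cn (2*m) => QuadraticMap.polar (⇑Q) z e) = ⇑((pB Q).flip e) := by
        funext z
        rw [← pB_apply]
        rfl
      rw [he]
      exact ((pB Q).flip e).continuous
    have hAcont : Continuous (omDag m Q) := by
      apply continuous_pi
      intro j
      by_cases h : (j : ℕ) < m
      · simp only [omDag, dif_pos h]
        exact hp _
      · simp only [omDag, dif_neg h]
        exact (hp _).neg
    have hfg : AnalyticOnNhd ℂ (fderiv ℂ g) V := hg.fderiv
    have hHcont : ContinuousAt (fun z => fderiv ℂ g z (omDag m Q z)) x := by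
      have h1 : ContinuousAt (fderiv ℂ g) x := (hfg x hxV).continuousAt
      have h2 : ContinuousAt (omDag m Q) x := hAcont.continuousAt
      have h3 := (isBoundedBilinearMap_apply
        (𝕜 := ℂ) (E := Cn (2*m)) (F := ℂ)).continuous.continuousAt
        (x := (fderiv ℂ g x, omDag m Q x))
      exact ContinuousAt.comp (f := fun z => (fderiv ℂ g z, omDag m Q z)) h3 (h1.prodMk h2)
    have hxT : x ∈ closure (V ∩ {z | SmoothPt m Y z}) :=
      hVo.inter_closure ⟨hxV, hY.2.1 x hxY⟩
    have hTzero : ∀ z ∈ V ∩ {z | SmoothPt m Y z}, fderiv ℂ g z (omDag m Q z) = 0 := by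
      intro z hz
      exact stepS hY hQ0 hz.2 V g hVo hz.1 hg hvan
    have hne : Filter.NeBot (nhdsWithin x (V ∩ {z | SmoothPt m Y z})) :=
      mem_closure_iff_nhdsWithin_neBot.mp hxT
    have t1 : Filter.Tendsto (fun z => fderiv ℂ g z (omDag m Q z))
        (nhdsWithin x (V ∩ {z | SmoothPt m Y z})) (nhds (fderiv ℂ g x (omDag m Q x))) :=
      (hHcont.continuousWithinAt).tendsto
    have t2 : Filter.Tendsto (fun z => fderiv ℂ g z (omDag m Q z))
        (nhdsWithin x (V ∩ {z | SmoothPt m Y z})) (nhds 0) := by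
      apply Filter.Tendsto.congr' _ tendsto_const_nhds
      filter_upwards [self_mem_nhdsWithin] with z hz
      exact (hTzero z hz).symm
    exact tendsto_nhds_unique t1 t2
end

section
/- Let (M,D) be a contact manifold, L = T_M/D with quotient homomorphism ϑ: T_M → L, and S ⊂ M a Legendrian submanifold with 𝓛 = L|_S, ζ: N_S ≅ J¹_S 𝓛 the natural isomorphism, and η: cont(M,D) ≅ H⁰(M,L) the isomorphism induced by ϑ. Then: (1) for a family of Legendrian submanifolds {S_t ⊂ M, t ∈ Δ} with S_0 = S, the section ζ(Ṡ_0) ∈ H⁰(S, J¹_S 𝓛), the image of the infinitesimal deformation Ṡ_0 ∈ H⁰(S, N_S) under ζ, is the 1-jet of the section ϑ(Ṡ_0) ∈ H⁰(S, 𝓛); and (2) for an infinitesimal contactomorphism A ∈ cont(M,D), the section ζ(A mod T_S) ∈ H⁰(S, J¹_S 𝓛) is the 1-jet of the restriction η(A)|_S ∈ H⁰(S, 𝓛). -/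
open Set Function

/-- **Proposition 5.10 (Proposition `p.contact2`).**
Let `(M, D = ker θ)` be a contact manifold, `L = T_M/D` (trivialized by `θ`, so that
`ϑ = θ` and `η(A) = θ(A)`), and `S ⊆ M` a Legendrian submanifold.  Under the natural
isomorphism `ζ : N_S ≅ J¹_S 𝓛`, `ζ(ν) = (θ(ν), −ι_ν dθ|_{T_S})`, so that
"`ζ(ν)` is the 1-jet of `ϑ(ν)`" amounts to `d(θ(ν))(u) = −dθ(ν, u)` for `u ∈ T_S`
(the `𝓛`-components agreeing by `j ∘ ζ = ϑ`).  Then: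
(1) for a holomorphic family of Legendrian submanifolds `{S_t}` with `S_0 = S`, the
section `ζ(Ṡ_0)` is the 1-jet of `ϑ(Ṡ_0)`; and
(2) for an infinitesimal contactomorphism `A ∈ cont(M,D)`, the section
`ζ(A mod T_S)` is the 1-jet of `η(A)|_S`. -/
theorem jet_description_of_infinitesimal_deformations
    (m : ℕ) (U : Set (Cn (2*m+1))) (θ : Cn (2*m+1) → (Cn (2*m+1) →L[ℂ] ℂ))
    (hθ : IsContactForm m U θ)
    (S : Set (Cn (2*m+1))) (hS : IsLegSubmanifold m U θ S) :
    -- (1)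
    (∀ (Δ : Set ℂ), IsOpen Δ → (0 : ℂ) ∈ Δ →
      ∀ St : ℂ → Set (Cn (2*m+1)), St 0 = S →
        (∀ t ∈ Δ, IsLegSubmanifold m U θ (St t)) →
        ∀ z ∈ S, ∀ (W : Set (Cn (2*m+1))) (δ : Set ℂ)
          (G : Cn (2*m+1) × ℂ → Cn (2*m+1)),
          IsOpen W → IsOpen δ → z ∈ W → (0 : ℂ) ∈ δ → δ ⊆ Δ →
          AnalyticOnNhd ℂ G (W ×ˢ δ) →
          (∀ w ∈ W ∩ S, G (w, 0) = w) →
          (∀ w ∈ W ∩ S, ∀ t ∈ δ, G (w, t) ∈ St t) →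
          -- `ζ(Ṡ_0)` is the 1-jet of `ϑ(Ṡ_0)`, where `Ṡ_0 = (d/dt)|₀ G`:
          ∀ u ∈ zTang S z,
            fderiv ℂ (fun y => θ y (deriv (fun s => G (y, s)) 0)) z u
              = - exd θ z (deriv (fun s => G (z, s)) 0) u) ∧
    -- (2)
    (∀ A : Cn (2*m+1) → Cn (2*m+1), IsInfCont m U θ A →
      ∀ z ∈ S, ∀ u ∈ zTang S z,
        fderiv ℂ (fun y => θ y (A y)) z u = - exd θ z (A z) u) := by

  obtain ⟨hSU, hSleg⟩ := hS
  obtain ⟨hUopen, hθan, -⟩ := hθ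
  constructor
  · -- Part (1)
    intro Δ hΔopen hΔ0 St hSt0 hLeg z hz W δ G hWopen hδopen hzW h0δ hδΔ hGan hG0 hGSt u hu
    have hzU : z ∈ U := hSU hz
    have hθz : DifferentiableAt ℂ θ z := (hθan z hzU).differentiableAt
    have hz0 : ((z, (0:ℂ)) : Cn (2*m+1) × ℂ) ∈ W ×ˢ δ := ⟨hzW, h0δ⟩
    set Φ : Cn (2*m+1) × ℂ → (Cn (2*m+1) × ℂ →L[ℂ] Cn (2*m+1)) := fderiv ℂ G with hΦdef
    have hΦan : AnalyticOnNhd ℂ Φ (W ×ˢ δ) := hGan.fderiv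
    have hGd : ∀ p ∈ W ×ˢ δ, HasFDerivAt G (Φ p) p := fun p hp =>
      (hGan p hp).differentiableAt.hasFDerivAt
    -- the t-slice derivative
    have hslice : ∀ y t, ((y, t) : Cn (2*m+1) × ℂ) ∈ W ×ˢ δ →
        HasDerivAt (fun s => G (y, s)) (Φ (y, t) ((0 : Cn (2*m+1)), (1:ℂ))) t := by
      intro y t hp
      have h1 : HasDerivAt (fun s : ℂ => ((y : Cn (2*m+1)), s)) (((0:Cn (2*m+1)), (1:ℂ))) t :=
        (hasDerivAt_const _ _).prodMk (hasDerivAt_id _)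
      exact (hGd (y, t) hp).comp_hasDerivAt t h1
    set νz : Cn (2*m+1) := Φ (z, 0) ((0 : Cn (2*m+1)), (1:ℂ)) with hνzdef
    have hνz : deriv (fun s => G (z, s)) 0 = νz := (hslice z 0 hz0).deriv
    -- the w-slice fderiv
    have hwslice : ∀ y t, ((y, t) : Cn (2*m+1) × ℂ) ∈ W ×ˢ δ →
        HasFDerivAt (fun w => G (w, t))
          ((Φ (y, t)).comp (ContinuousLinearMap.inl ℂ (Cn (2*m+1)) ℂ)) y := by
      intro y t hp
      exact (hGd (y, t) hp).comp y (hasFDerivAt_prodMk_left y t)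
    -- `fderiv G (z,0) (u,0) = u`, since `G (·,0) = id` on `S`
    have hE0 : Φ (z, 0) ((u, (0:ℂ))) = u := by
      funext j
      have hgj : fderiv ℂ (fun w => G (w, (0:ℂ)) j - w j) z u = 0 := by
        refine hu W (fun w => G (w, (0:ℂ)) j - w j) hWopen hzW ?_ ?_
        · intro w hw
          have hpair : AnalyticAt ℂ (fun w' : Cn (2*m+1) => ((w', (0:ℂ)) : Cn (2*m+1) × ℂ)) w :=
            analyticAt_id.prod analyticAt_const
          have hGw : AnalyticAt ℂ (fun w => G (w, (0:ℂ))) w := by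
            have := AnalyticAt.comp (f := fun w' : Cn (2*m+1) => ((w', (0:ℂ)) : Cn (2*m+1) × ℂ))
              (x := w) (hGan (w, 0) ⟨hw, h0δ⟩) hpair
            simpa [Function.comp_def] using this
          exact (((ContinuousLinearMap.proj j :
              Cn (2*m+1) →L[ℂ] ℂ).analyticAt _).comp hGw).sub
            ((ContinuousLinearMap.proj j : Cn (2*m+1) →L[ℂ] ℂ).analyticAt w)
        · intro w hw
          show G (w, (0:ℂ)) j - w j = 0
          rw [hG0 w ⟨hw.2, hw.1⟩]; ring
      have hder : HasFDerivAt (fun w => G (w, (0:ℂ)) j - w j)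
          (((ContinuousLinearMap.proj j : Cn (2*m+1) →L[ℂ] ℂ).comp
            ((Φ (z, 0)).comp (ContinuousLinearMap.inl ℂ (Cn (2*m+1)) ℂ))) -
            (ContinuousLinearMap.proj j : Cn (2*m+1) →L[ℂ] ℂ)) z := by
        exact (((ContinuousLinearMap.proj j :
            Cn (2*m+1) →L[ℂ] ℂ).hasFDerivAt.comp z (hwslice z 0 hz0))).sub
          (ContinuousLinearMap.proj j : Cn (2*m+1) →L[ℂ] ℂ).hasFDerivAt
      rw [hder.fderiv] at hgj
      simpa using sub_eq_zero.mp hgj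
    -- the function `f t = θ (G (z,t)) (∂_w G (z,t) u)` vanishes identically
    have hfz : ∀ t ∈ δ, θ (G (z, t)) (Φ (z, t) ((u, (0:ℂ)))) = 0 := by
      intro t ht
      have hzt : ((z, t) : Cn (2*m+1) × ℂ) ∈ W ×ˢ δ := ⟨hzW, ht⟩
      obtain ⟨hStU, hStleg⟩ := hLeg t (hδΔ ht)
      have hGzt : G (z, t) ∈ St t := hGSt z ⟨hzW, hz⟩ t ht
      refine (hStleg _ hGzt).2 _ ?_
      -- the image vector is Zariski-tangent to `St t`
      intro V g hVopen hmemV hgan hgz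
      have hGt : ∀ w ∈ W, AnalyticAt ℂ (fun w => G (w, t)) w := by
        intro w hw
        have hpair : AnalyticAt ℂ (fun w' : Cn (2*m+1) => ((w', t) : Cn (2*m+1) × ℂ)) w :=
          analyticAt_id.prod analyticAt_const
        have := AnalyticAt.comp (f := fun w' : Cn (2*m+1) => ((w', t) : Cn (2*m+1) × ℂ))
          (x := w) (hGan (w, t) ⟨hw, ht⟩) hpair
        simpa [Function.comp_def] using this
      set W' : Set (Cn (2*m+1)) := W ∩ (fun w => G (w, t)) ⁻¹' V with hW'def
      have hW'open : IsOpen W' := by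
        rw [isOpen_iff_mem_nhds]
        intro w hw
        exact Filter.inter_mem (hWopen.mem_nhds hw.1)
          ((hGt w hw.1).continuousAt.preimage_mem_nhds (hVopen.mem_nhds hw.2))
      have hzW' : z ∈ W' := ⟨hzW, hmemV⟩
      have hvanish : fderiv ℂ (fun w => g (G (w, t))) z u = 0 := by
        refine hu W' (fun w => g (G (w, t))) hW'open hzW' ?_ ?_
        · intro w hw
          have := AnalyticAt.comp (f := fun w => G (w, t)) (x := w)
            (hgan _ hw.2) (hGt w hw.1)
          simpa [Function.comp_def] using this
        · intro w hw
          exact hgz _ ⟨hGSt w ⟨hw.2.1, hw.1⟩ t ht, hw.2.2⟩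
      have hder : HasFDerivAt (fun w => g (G (w, t)))
          ((fderiv ℂ g (G (z, t))).comp
            ((Φ (z, t)).comp (ContinuousLinearMap.inl ℂ (Cn (2*m+1)) ℂ))) z :=
        ((hgan _ hmemV).differentiableAt.hasFDerivAt).comp z (hwslice z t hzt)
      rw [hder.fderiv] at hvanish
      simpa using hvanish
    -- second derivative data
    have hΦz : DifferentiableAt ℂ Φ (z, 0) := (hΦan _ hz0).differentiableAt
    have hsym : IsSymmSndFDerivAt ℂ G (z, 0) :=
      ((hGan _ hz0).contDiffAt (n := 2)).isSymmSndFDerivAt (by simp)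
    set e₁ : Cn (2*m+1) :=
      fderiv ℂ Φ (z, 0) (((0:Cn (2*m+1)), (1:ℂ))) ((u, (0:ℂ))) with he₁def
    -- derivative of `f` at `0`
    have hGz0 : G (z, 0) = z := hG0 z ⟨hzW, hz⟩
    have hγ : HasDerivAt (fun s => G (z, s)) νz 0 := hslice z 0 hz0
    have hθG : HasFDerivAt θ (fderiv ℂ θ z) (G (z, 0)) := by
      rw [hGz0]; exact hθz.hasFDerivAt
    have hc : HasDerivAt (fun t => θ (G (z, t))) (fderiv ℂ θ z νz) 0 :=
      hθG.comp_hasDerivAt 0 hγ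
    have hΦslice : HasDerivAt (fun t => Φ (z, t))
        (fderiv ℂ Φ (z, 0) (((0:Cn (2*m+1)), (1:ℂ)))) 0 :=
      hΦz.hasFDerivAt.comp_hasDerivAt 0 ((hasDerivAt_const _ _).prodMk (hasDerivAt_id _))
    have hEd : HasDerivAt (fun t => Φ (z, t) ((u, (0:ℂ)))) e₁ 0 := by
      have := hΦslice.clm_apply (hasDerivAt_const 0 ((u, (0:ℂ))))
      simpa using this
    have hfd : HasDerivAt (fun t => θ (G (z, t)) (Φ (z, t) ((u, (0:ℂ)))))
        (fderiv ℂ θ z νz u + θ z e₁) 0 := by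
      have := hc.clm_apply hEd
      rw [hE0, hGz0] at this
      exact this
    have hkey : fderiv ℂ θ z νz u + θ z e₁ = 0 := by
      have h1 : deriv (fun t => θ (G (z, t)) (Φ (z, t) ((u, (0:ℂ))))) 0
          = fderiv ℂ θ z νz u + θ z e₁ := hfd.deriv
      have h2 : deriv (fun t => θ (G (z, t)) (Φ (z, t) ((u, (0:ℂ))))) 0 = 0 := by
        have heq0 : (fun t => θ (G (z, t)) (Φ (z, t) ((u, (0:ℂ))))) =ᶠ[nhds (0:ℂ)]
            (fun _ => (0:ℂ)) := by
          filter_upwards [hδopen.mem_nhds h0δ] with t ht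
          exact hfz t ht
        rw [heq0.deriv_eq, deriv_const]
      rw [← h1, h2]
    -- the fderiv in `y` of `ν`
    have hN3 : HasFDerivAt (fun y => Φ (y, (0:ℂ)))
        ((fderiv ℂ Φ (z, 0)).comp (ContinuousLinearMap.inl ℂ (Cn (2*m+1)) ℂ)) z :=
      hΦz.hasFDerivAt.comp z (hasFDerivAt_prodMk_left z 0)
    have hN4 : HasFDerivAt (fun y => Φ (y, (0:ℂ)) (((0:Cn (2*m+1)), (1:ℂ))))
        (((Φ (z, 0)).comp (0 : Cn (2*m+1) →L[ℂ] (Cn (2*m+1) × ℂ))) +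
          ((fderiv ℂ Φ (z, 0)).comp
            (ContinuousLinearMap.inl ℂ (Cn (2*m+1)) ℂ)).flip (((0:Cn (2*m+1)), (1:ℂ)))) z := by
      have := hN3.clm_apply (hasFDerivAt_const (((0:Cn (2*m+1)), (1:ℂ))) z)
      simpa using this
    have hNd : DifferentiableAt ℂ (fun y => Φ (y, (0:ℂ)) (((0:Cn (2*m+1)), (1:ℂ)))) z :=
      hN4.differentiableAt
    have hNu : fderiv ℂ (fun y => Φ (y, (0:ℂ)) (((0:Cn (2*m+1)), (1:ℂ)))) z u = e₁ := by
      rw [hN4.fderiv]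
      have hsymu : fderiv ℂ Φ (z, 0) ((u, (0:ℂ))) (((0:Cn (2*m+1)), (1:ℂ))) = e₁ := by
        rw [he₁def, hΦdef]
        exact hsym ((u, (0:ℂ))) (((0:Cn (2*m+1)), (1:ℂ)))
      simpa using hsymu
    -- rewrite the goal
    have heq : (fun y => θ y (deriv (fun s => G (y, s)) 0)) =ᶠ[nhds z]
        (fun y => θ y (Φ (y, (0:ℂ)) (((0:Cn (2*m+1)), (1:ℂ))))) := by
      filter_upwards [hWopen.mem_nhds hzW] with y hy
      rw [(hslice y 0 ⟨hy, h0δ⟩).deriv]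
    rw [heq.fderiv_eq, fderiv_clm_apply hθz hNd, hνz]
    simp only [ContinuousLinearMap.add_apply, ContinuousLinearMap.comp_apply,
      ContinuousLinearMap.flip_apply, hNu, exd]
    have hθe : θ z e₁ = -(fderiv ℂ θ z νz u) := by linear_combination hkey
    rw [hθe]; ring
  · -- Part (2)
    intro A hA z hz u hu
    obtain ⟨hAan, g, hgan, hLie⟩ := hA
    have hzU : z ∈ U := hSU hz
    have hθz : DifferentiableAt ℂ θ z := (hθan z hzU).differentiableAt
    have hAz : DifferentiableAt ℂ A z := (hAan z hzU).differentiableAt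
    have hθu : θ z u = 0 := (hSleg z hz).2 u hu
    have hLu := congrArg (fun L : Cn (2*m+1) →L[ℂ] ℂ => L u) (hLie z hzU)
    simp only [LieD, ContinuousLinearMap.add_apply, ContinuousLinearMap.comp_apply,
      ContinuousLinearMap.smul_apply, hθu, smul_zero] at hLu
    rw [fderiv_clm_apply hθz hAz]
    simp only [ContinuousLinearMap.add_apply, ContinuousLinearMap.comp_apply,
      ContinuousLinearMap.flip_apply, exd]
    linear_combination hLu
end
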